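/- Let i ≥ 1 and suppose χ_i := q11^{i²}·q12^i·q21^i·q22 satisfies χ_i² + χ_i + 1 = 0. Then (D₁^{i-1} ∘ D₂)(z_i³) = c_i·z_{i,1}, where z_{i,1} := z_{i+1}·z_i − q11^{i(i+1)}·q12^{i+1}·q21^i·q22·z_i·z_{i+1} and c_i := q21^{-i}·b_i·[i]!_{q11^{-1}}. -/

import Mathlib

noncomputable section

variable {k : Type*} [Field k]

/-- The algebra endomorphism of the free algebra on two generators with
`x1 ↦ a • x1`, `x2 ↦ b • x2`. -/
def alph (a b : k) : FreeAlgebra k (Fin 2) →ₐ[k] FreeAlgebra k (Fin 2) :=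
  FreeAlgebra.lift k ![a • FreeAlgebra.ι k 0, b • FreeAlgebra.ι k 1]

/-- The elements `z_i`, defined by `z_0 = x2`, `z_{i+1} = x1·z_i − q11^i·q12·z_i·x1`. -/
def zz (q11 q12 : k) : ℕ → FreeAlgebra k (Fin 2)
  | 0 => FreeAlgebra.ι k 1
  | (i + 1) => FreeAlgebra.ι k 0 * zz q11 q12 i
      - (q11 ^ i * q12) • (zz q11 q12 i * FreeAlgebra.ι k 0)

/-- The elements `u_i`, defined by `u_0 = x1`, `u_{i+1} = u_i·x2 − q12·q22^i·x2·u_i`. -/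
def uu (q12 q22 : k) : ℕ → FreeAlgebra k (Fin 2)
  | 0 => FreeAlgebra.ι k 0
  | (i + 1) => uu q12 q22 i * FreeAlgebra.ι k 1
      - (q12 * q22 ^ i) • (FreeAlgebra.ι k 1 * uu q12 q22 i)

/-- The q-number `[m]_p = 1 + p + ⋯ + p^{m-1}`. -/
def qnum (p : k) (m : ℕ) : k := ∑ j ∈ Finset.range m, p ^ j

/-- The q-factorial `[m]!_p = [1]_p·[2]_p⋯[m]_p`. -/
def qfact (p : k) (m : ℕ) : k := ∏ l ∈ Finset.range m, qnum p (l + 1)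

/-- `b_i = ∏_{j=0}^{i-1} (1 − q11^j·q12·q21)`. -/
def bb (q11 q12 q21 : k) (i : ℕ) : k :=
  ∏ j ∈ Finset.range i, (1 - q11 ^ j * q12 * q21)

/-- `c_i = q21^{-i}·b_i·[i]!_{q11⁻¹}`. -/
def cc (q11 q12 q21 : k) (i : ℕ) : k :=
  q21⁻¹ ^ i * bb q11 q12 q21 i * qfact q11⁻¹ i

/-- `d_{i,0}`. -/
def dd (q11 q12 q21 q22 : k) (i : ℕ) : k :=
  q21⁻¹ * (1 - q11 ^ i * q12 * q21) * qnum q11⁻¹ (i + 1)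
    + (q11 ^ (i * (i + 1)) * q12 ^ i * q21 ^ (i + 1) * q22)⁻¹
    - q11 ^ (i * (i + 1)) * q12 ^ (i + 1) * q21 ^ i * q22

/-!
The `z_i` are `D₁`-constants and eigenvectors of both twists, while `D₂ z_i = q21^{-i} b_i x₁^i`.
The twisted Leibniz rule therefore gives `D₂(z_i³) = β (x₁^i z_i² + γ z_i x₁^i z_i + γ² z_i² x₁^i)`,
`γ` being the `α₂`-eigenvalue of `z_i`, and `D₁^{i-1}` lowers each `x₁^i` to `[i]! x₁`, picking up
the `α₁`-eigenvalue `λ` of `z_i` at every step for each `z_i` to the left. The coefficient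
`s = γ λ^{i-1}` satisfies `s χ_i = μ := q11^i q12`; as `χ_i` is a primitive cube root of unity,
`s = -(μ + μ χ_i)` and `s² = μ · μ χ_i`, which are the coefficients of `z_{i+1} z_i - μ χ_i z_i z_{i+1}`
expanded in the same three monomials.
-/

theorem LinearMap.iterate_map_smul {R M : Type*} [Semiring R] [AddCommMonoid M] [Module R M]
    (f : M →ₗ[R] M) (n : ℕ) (c : R) (x : M) : f^[n] (c • x) = c • f^[n] x := by
  rw [← Module.End.pow_apply, map_smul, Module.End.pow_apply]

lemma qnum_one (p : k) : qnum p 1 = 1 := by simp [qnum]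

lemma qnum_succ (p : k) (m : ℕ) : qnum p (m + 1) = p * qnum p m + 1 := by
  simp [qnum, geom_sum_succ]

lemma qfact_succ (p : k) (m : ℕ) : qfact p (m + 1) = qfact p m * qnum p (m + 1) :=
  Finset.prod_range_succ _ _

lemma bb_succ (q11 q12 q21 : k) (i : ℕ) :
    bb q11 q12 q21 (i + 1) = bb q11 q12 q21 i * (1 - q11 ^ i * q12 * q21) :=
  Finset.prod_range_succ _ _

def IsSkewDerivation {A : Type*} [Ring A] [Algebra k A] (σ : A →ₐ[k] A) (D : A →ₗ[k] A) : Prop :=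
  ∀ a b, D (a * b) = D a * b + σ a * D b

namespace IsSkewDerivation

variable {A : Type*} [Ring A] [Algebra k A] {σ : A →ₐ[k] A} {D : A →ₗ[k] A}

theorem map_one (hD : IsSkewDerivation σ D) : D 1 = 0 := by
  simpa using hD 1 1

theorem map_mul_of_map_eq_zero_right (hD : IsSkewDerivation σ D) {z : A} (hz : D z = 0)
    (y : A) : D (y * z) = D y * z := by
  rw [hD, hz, mul_zero, add_zero]

theorem map_mul_of_map_eq_zero_left (hD : IsSkewDerivation σ D) {z : A} {c : k}
    (hz : D z = 0) (hσ : σ z = c • z) (y : A) : D (z * y) = c • (z * D y) := by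
  rw [hD, hz, hσ, zero_mul, zero_add, smul_mul_assoc]

theorem map_pow_eq_zero (hD : IsSkewDerivation σ D) {z : A} (hz : D z = 0) (n : ℕ) :
    D (z ^ n) = 0 := by
  induction n with
  | zero => rw [pow_zero]; exact hD.map_one
  | succ n ih => rw [pow_succ, hD.map_mul_of_map_eq_zero_right hz, ih, zero_mul]

theorem map_pow_succ_of_map_eq_one (hD : IsSkewDerivation σ D) {x : A} {p : k}
    (hx : D x = 1) (hσ : σ x = p • x) (n : ℕ) :
    D (x ^ (n + 1)) = qnum p (n + 1) • x ^ n := by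
  induction n with
  | zero => simpa [qnum_one] using hx
  | succ n ih =>
    rw [pow_succ' _ (n + 1), hD, hx, ih, hσ, one_mul, smul_mul_smul_comm, ← pow_succ',
      qnum_succ p (n + 1), add_smul, one_smul, add_comm]

theorem iterate_map_pow_of_map_eq_one (hD : IsSkewDerivation σ D) {x : A} {p : k}
    (hx : D x = 1) (hσ : σ x = p • x) (n : ℕ) :
    D^[n] (x ^ (n + 1)) = qfact p (n + 1) • x := by
  induction n with
  | zero => simp [qfact, qnum_one]
  | succ n ih =>
    rw [Function.iterate_succ_apply, hD.map_pow_succ_of_map_eq_one hx hσ, D.iterate_map_smul, ih,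
      smul_smul, qfact_succ p (n + 1), mul_comm]

theorem iterate_map_mul_of_map_eq_zero_right (hD : IsSkewDerivation σ D) {z : A}
    (hz : D z = 0) (y : A) (n : ℕ) : D^[n] (y * z) = D^[n] y * z := by
  induction n generalizing y with
  | zero => rfl
  | succ n ih =>
    rw [Function.iterate_succ_apply, Function.iterate_succ_apply,
      hD.map_mul_of_map_eq_zero_right hz, ih]

theorem iterate_map_mul_of_map_eq_zero_left (hD : IsSkewDerivation σ D) {z : A} {c : k}
    (hz : D z = 0) (hσ : σ z = c • z) (y : A) (n : ℕ) :
    D^[n] (z * y) = c ^ n • (z * D^[n] y) := by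
  induction n generalizing y with
  | zero => simp
  | succ n ih =>
    rw [Function.iterate_succ_apply, Function.iterate_succ_apply,
      hD.map_mul_of_map_eq_zero_left hz hσ, D.iterate_map_smul, ih, smul_smul, pow_succ']

theorem map_pow_three (hD : IsSkewDerivation σ D) {z : A} {c : k} (hσ : σ z = c • z) :
    D (z ^ 3) = D z * z ^ 2 + c • (z * D z * z) + c ^ 2 • (z ^ 2 * D z) := by
  rw [pow_succ', hD, pow_two, hD, hσ]
  simp only [smul_mul_assoc, smul_smul, mul_add, mul_smul_comm, mul_assoc]
  rw [add_assoc, sq]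

theorem iterate_map_map_pow_three {σ' : A →ₐ[k] A} {D' : A →ₗ[k] A}
    (hD : IsSkewDerivation σ D) (hD' : IsSkewDerivation σ' D') {x z : A} {p c c' β : k} {n : ℕ}
    (hx : D x = 1) (hσx : σ x = p • x) (hz : D z = 0) (hσz : σ z = c • z)
    (hσ'z : σ' z = c' • z) (hD'z : D' z = β • x ^ (n + 1)) :
    D^[n] (D' (z ^ 3)) = (β * qfact p (n + 1)) •
      (x * z ^ 2 + (c' * c ^ n) • (z * x * z) + (c' * c ^ n) ^ 2 • (z ^ 2 * x)) := by
  have hz2 := hD.map_pow_eq_zero hz 2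
  have hσz2 : σ (z ^ 2) = c ^ 2 • z ^ 2 := by rw [map_pow, hσz, smul_pow]
  rw [hD'.map_pow_three hσ'z, hD'z]
  simp only [smul_mul_assoc, mul_smul_comm, iterate_map_add, D.iterate_map_smul]
  rw [hD.iterate_map_mul_of_map_eq_zero_right hz2, hD.iterate_map_mul_of_map_eq_zero_right hz,
    hD.iterate_map_mul_of_map_eq_zero_left hz hσz, hD.iterate_map_mul_of_map_eq_zero_left hz2 hσz2,
    hD.iterate_map_pow_of_map_eq_one hx hσx]
  simp only [smul_mul_assoc, mul_smul_comm, smul_add, smul_smul]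
  match_scalars <;> ring

end IsSkewDerivation

lemma alph_ι_zero (a b : k) : alph a b (FreeAlgebra.ι k 0) = a • FreeAlgebra.ι k 0 := by
  simp [alph]

lemma alph_ι_one (a b : k) : alph a b (FreeAlgebra.ι k 1) = b • FreeAlgebra.ι k 1 := by
  simp [alph]

lemma alph_zz (q11 q12 a b : k) (i : ℕ) :
    alph a b (zz q11 q12 i) = (a ^ i * b) • zz q11 q12 i := by
  induction i with
  | zero => simpa [zz] using alph_ι_one a b
  | succ n ih =>
    simp only [zz, map_sub, map_mul, map_smul, ih, alph_ι_zero, mul_smul_comm, smul_mul_assoc]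
    match_scalars <;> ring

theorem IsSkewDerivation.map_zz_eq_zero {q11 q12 : k} (hq11 : q11 ≠ 0) (hq12 : q12 ≠ 0)
    {D : FreeAlgebra k (Fin 2) →ₗ[k] FreeAlgebra k (Fin 2)}
    (hD : IsSkewDerivation (alph q11⁻¹ q12⁻¹) D)
    (hx1 : D (FreeAlgebra.ι k 0) = 1) (hx2 : D (FreeAlgebra.ι k 1) = 0) (i : ℕ) :
    D (zz q11 q12 i) = 0 := by
  induction i with
  | zero => exact hx2
  | succ n ih =>
    rw [zz, map_sub, map_smul, hD, hD, ih, hx1, alph_zz]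
    simp only [mul_zero, zero_mul, one_mul, add_zero, zero_add, mul_one, smul_smul]
    rw [inv_pow, show q11 ^ n * q12 * ((q11 ^ n)⁻¹ * q12⁻¹) = 1 by field_simp,
      one_smul, sub_self]

theorem IsSkewDerivation.map_zz {q11 q12 q21 b : k} (hq21 : q21 ≠ 0)
    {D : FreeAlgebra k (Fin 2) →ₗ[k] FreeAlgebra k (Fin 2)}
    (hD : IsSkewDerivation (alph q21⁻¹ b) D)
    (hx1 : D (FreeAlgebra.ι k 0) = 0) (hx2 : D (FreeAlgebra.ι k 1) = 1) (i : ℕ) :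
    D (zz q11 q12 i) = (q21⁻¹ ^ i * bb q11 q12 q21 i) • FreeAlgebra.ι k 0 ^ i := by
  induction i with
  | zero => simpa [zz, bb] using hx2
  | succ n ih =>
    rw [zz, map_sub, map_smul, hD, hD, ih, hx1, alph_ι_zero, alph_zz]
    simp only [zero_mul, mul_zero, zero_add, add_zero, smul_mul_assoc,
      mul_smul_comm, smul_smul, ← pow_succ, ← pow_succ', bb_succ]
    match_scalars
    linear_combination (q11 ^ n * q12 * q21⁻¹ ^ n * bb q11 q12 q21 n) * mul_inv_cancel₀ hq21

/-- If `χ` is a primitive cube root of unity then `μ / χ = μ χ² = -(μ + μ χ)`. -/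
lemma eq_and_sq_eq_of_mul_eq_of_sq_add_add_one {χ s μ : k} (hχ : χ ^ 2 + χ + 1 = 0)
    (hs : s * χ = μ) : s = -(μ + μ * χ) ∧ s ^ 2 = μ * (μ * χ) := by
  have hs' : s = -(μ + μ * χ) := by linear_combination s * hχ - (1 + χ) * hs
  exact ⟨hs', by rw [hs']; linear_combination μ ^ 2 * hχ⟩

theorem D1_pow_D2_z_cube_general
    (q11 q12 q21 q22 : k)
    (hq11 : q11 ≠ 0) (hq12 : q12 ≠ 0) (hq21 : q21 ≠ 0) (hq22 : q22 ≠ 0)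
    (D1 : FreeAlgebra k (Fin 2) →ₗ[k] FreeAlgebra k (Fin 2))
    (hD1x1 : D1 (FreeAlgebra.ι k 0) = 1)
    (hD1x2 : D1 (FreeAlgebra.ι k 1) = 0)
    (hD1mul : ∀ a b : FreeAlgebra k (Fin 2),
      D1 (a * b) = D1 a * b + alph q11⁻¹ q12⁻¹ a * D1 b)
    (D2 : FreeAlgebra k (Fin 2) →ₗ[k] FreeAlgebra k (Fin 2))
    (hD2x1 : D2 (FreeAlgebra.ι k 0) = 0)
    (hD2x2 : D2 (FreeAlgebra.ι k 1) = 1)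
    (hD2mul : ∀ a b : FreeAlgebra k (Fin 2),
      D2 (a * b) = D2 a * b + alph q21⁻¹ q22⁻¹ a * D2 b)
    (i : ℕ) (hi : 1 ≤ i)
    (hchi : (q11 ^ (i ^ 2) * q12 ^ i * q21 ^ i * q22) ^ 2
        + q11 ^ (i ^ 2) * q12 ^ i * q21 ^ i * q22 + 1 = 0) :
    (⇑D1)^[i - 1] (D2 (zz q11 q12 i ^ 3))
      = cc q11 q12 q21 i • (zz q11 q12 (i + 1) * zz q11 q12 i
          - (q11 ^ (i * (i + 1)) * q12 ^ (i + 1) * q21 ^ i * q22)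
              • (zz q11 q12 i * zz q11 q12 (i + 1))) := by
  obtain ⟨m, rfl⟩ : ∃ m, i = m + 1 := ⟨i - 1, by omega⟩
  have hD1 : IsSkewDerivation (alph q11⁻¹ q12⁻¹) D1 := hD1mul
  have hD2 : IsSkewDerivation (alph q21⁻¹ q22⁻¹) D2 := hD2mul
  rw [Nat.add_sub_cancel, hD1.iterate_map_map_pow_three hD2 hD1x1 (alph_ι_zero _ _)
    (hD1.map_zz_eq_zero hq11 hq12 hD1x1 hD1x2 _) (alph_zz ..) (alph_zz ..)
    (hD2.map_zz hq21 hD2x1 hD2x2 _)]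
  have hs : q21⁻¹ ^ (m + 1) * q22⁻¹ * (q11⁻¹ ^ (m + 1) * q12⁻¹) ^ m
      * (q11 ^ ((m + 1) ^ 2) * q12 ^ (m + 1) * q21 ^ (m + 1) * q22) = q11 ^ (m + 1) * q12 := by
    simp only [inv_pow, mul_pow, ← pow_mul]
    field_simp
    ring
  obtain ⟨hs1, hs2⟩ := eq_and_sq_eq_of_mul_eq_of_sq_add_add_one hchi hs
  rw [hs2, hs1, cc, zz.eq_2 q11 q12 (m + 1)]
  simp only [pow_two, mul_sub, sub_mul, smul_mul_assoc, mul_smul_comm, mul_assoc]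
  module

theorem D1_pow_D2_z_cube
    (q11 q12 q21 q22 : k)
    (hq11 : q11 ≠ 0) (hq12 : q12 ≠ 0) (hq21 : q21 ≠ 0) (hq22 : q22 ≠ 0)
    (D1 : FreeAlgebra k (Fin 2) →ₗ[k] FreeAlgebra k (Fin 2))
    (hD1one : D1 1 = 0)
    (hD1x1 : D1 (FreeAlgebra.ι k 0) = 1)
    (hD1x2 : D1 (FreeAlgebra.ι k 1) = 0)
    (hD1mul : ∀ a b : FreeAlgebra k (Fin 2),
      D1 (a * b) = D1 a * b + alph q11⁻¹ q12⁻¹ a * D1 b)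
    (D2 : FreeAlgebra k (Fin 2) →ₗ[k] FreeAlgebra k (Fin 2))
    (hD2one : D2 1 = 0)
    (hD2x1 : D2 (FreeAlgebra.ι k 0) = 0)
    (hD2x2 : D2 (FreeAlgebra.ι k 1) = 1)
    (hD2mul : ∀ a b : FreeAlgebra k (Fin 2),
      D2 (a * b) = D2 a * b + alph q21⁻¹ q22⁻¹ a * D2 b)
    (i : ℕ) (hi : 1 ≤ i)
    (hchi : (q11 ^ (i ^ 2) * q12 ^ i * q21 ^ i * q22) ^ 2
        + q11 ^ (i ^ 2) * q12 ^ i * q21 ^ i * q22 + 1 = 0) :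
    (⇑D1)^[i - 1] (D2 (zz q11 q12 i ^ 3))
      = cc q11 q12 q21 i • (zz q11 q12 (i + 1) * zz q11 q12 i
          - (q11 ^ (i * (i + 1)) * q12 ^ (i + 1) * q21 ^ i * q22)
              • (zz q11 q12 i * zz q11 q12 (i + 1))) :=
  D1_pow_D2_z_cube_general q11 q12 q21 q22 hq11 hq12 hq21 hq22 D1 hD1x1 hD1x2 hD1mul D2 hD2x1 hD2x2
    hD2mul i hi hchi
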